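/- Let (u, B, Π) be a smooth solution of the stationary incompressible Hall-MHD equations on ℝ³ and let φ ∈ C_c^∞(ℝ³). Then the following local energy identity holds: ∫_{ℝ³} (|∇u|² + |curl B|²) φ² dx = −2 ∫_{ℝ³} φ ∇u : (u ⊗ ∇φ) dx − ∫_{ℝ³} ((u·∇)u · u) φ² dx − 2 ∫_{ℝ³} φ curl B · (∇φ × B) dx − 2 ∫_{ℝ³} φ (B × u) · (∇φ × B) dx − 2 ∫_{ℝ³} φ ((curl B) × B) · (∇φ × B) dx − ∫_{ℝ³} (∇Π · u) φ² dx, where ∇u : (u ⊗ ∇φ) := Σ_{i,j=1}^{3} (∂_j u_i)(u_i ∂_j φ). -/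

import Mathlib

open MeasureTheory Filter

noncomputable section

/-- Physical space `ℝ³`. -/
abbrev E3 : Type := EuclideanSpace ℝ (Fin 3)

/-- Partial derivative `∂ᵢ f` of a scalar function on `ℝ³`. -/
def pd (i : Fin 3) (f : E3 → ℝ) (x : E3) : ℝ :=
  fderiv ℝ f x (EuclideanSpace.single i 1)

/-- Laplacian of a scalar function on `ℝ³`. -/
def lap (f : E3 → ℝ) (x : E3) : ℝ := ∑ i, pd i (pd i f) x

/-- Gradient of a scalar function on `ℝ³`. -/
def grad (f : E3 → ℝ) (x : E3) : Fin 3 → ℝ := fun i => pd i f x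

/-- Divergence of a vector field on `ℝ³`. -/
def vdiv (u : E3 → Fin 3 → ℝ) (x : E3) : ℝ := ∑ i, pd i (fun y => u y i) x

/-- Componentwise Laplacian of a vector field on `ℝ³`. -/
def vlap (u : E3 → Fin 3 → ℝ) (x : E3) : Fin 3 → ℝ := fun i => lap (fun y => u y i) x

/-- Curl of a vector field on `ℝ³`. -/
def curl (u : E3 → Fin 3 → ℝ) (x : E3) : Fin 3 → ℝ :=
  ![pd 1 (fun y => u y 2) x - pd 2 (fun y => u y 1) x,
    pd 2 (fun y => u y 0) x - pd 0 (fun y => u y 2) x,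
    pd 0 (fun y => u y 1) x - pd 1 (fun y => u y 0) x]

/-- Cross product on `ℝ³`. -/
def cross (v w : Fin 3 → ℝ) : Fin 3 → ℝ :=
  ![v 1 * w 2 - v 2 * w 1, v 2 * w 0 - v 0 * w 2, v 0 * w 1 - v 1 * w 0]

/-- Euclidean dot product on `ℝ³`. -/
def dot3 (v w : Fin 3 → ℝ) : ℝ := ∑ i, v i * w i

/-- The convective derivative `(u·∇)v`. -/
def advect (u v : E3 → Fin 3 → ℝ) (x : E3) : Fin 3 → ℝ :=
  fun i => ∑ j, u x j * pd j (fun y => v y i) x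

/-- Euclidean norm of a vector of `ℝ³`. -/
def vnorm (v : Fin 3 → ℝ) : ℝ := Real.sqrt (∑ i, v i ^ 2)

/-- `|∇u|²`, the squared Frobenius norm of the Jacobian of a vector field. -/
def gradNormSq (u : E3 → Fin 3 → ℝ) (x : E3) : ℝ :=
  ∑ i, ∑ j, (pd j (fun y => u y i) x) ^ 2

/-- A smooth solution of the stationary incompressible Hall-MHD equations on `ℝ³`:
`-Δu + (u·∇)u + ∇Π - (curl B) × B = 0`,
`-ΔB + curl (B × u) + curl ((curl B) × B) = 0`, `div u = div B = 0`. -/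
structure IsHallMHD (u B : E3 → Fin 3 → ℝ) (P : E3 → ℝ) : Prop where
  smooth_u : ∀ i, ContDiff ℝ (⊤ : ℕ∞) fun x => u x i
  smooth_B : ∀ i, ContDiff ℝ (⊤ : ℕ∞) fun x => B x i
  smooth_P : ContDiff ℝ (⊤ : ℕ∞) P
  momentum : ∀ x i,
    -vlap u x i + advect u u x i + grad P x i - cross (curl B x) (B x) i = 0
  induction : ∀ x i,
    -vlap B x i + curl (fun y => cross (B y) (u y)) x i
      + curl (fun y => cross (curl B y) (B y)) x i = 0
  div_u : ∀ x, vdiv u x = 0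
  div_B : ∀ x, vdiv B x = 0

/-- A smooth solution of the stationary incompressible MHD equations on `ℝ³`:
`-Δu + (u·∇)u + ∇Π - (curl B) × B = 0`, `-ΔB + curl (B × u) = 0`, `div u = div B = 0`. -/
structure IsMHD (u B : E3 → Fin 3 → ℝ) (P : E3 → ℝ) : Prop where
  smooth_u : ∀ i, ContDiff ℝ (⊤ : ℕ∞) fun x => u x i
  smooth_B : ∀ i, ContDiff ℝ (⊤ : ℕ∞) fun x => B x i
  smooth_P : ContDiff ℝ (⊤ : ℕ∞) P
  momentum : ∀ x i,
    -vlap u x i + advect u u x i + grad P x i - cross (curl B x) (B x) i = 0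
  induction : ∀ x i,
    -vlap B x i + curl (fun y => cross (B y) (u y)) x i = 0
  div_u : ∀ x, vdiv u x = 0
  div_B : ∀ x, vdiv B x = 0

/-- The annulus `{x : a ≤ |x| ≤ b}` in `ℝ³`. -/
def annulus (a b : ℝ) : Set E3 := {x : E3 | a ≤ ‖x‖ ∧ ‖x‖ ≤ b}

/-- The quantity `(R^(-γ) ∫_{B(0,R)} |f|^p dx)^(1/p)`. -/
def morreyAvg (p γ : ℝ) (f : E3 → ℝ) (R : ℝ) : ℝ :=
  (R ^ (-γ) * ∫ x in Metric.closedBall (0 : E3) R, |f x| ^ p) ^ (1 / p)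

/-- The local Morrey norm `‖f‖_{M^p_γ} = sup_{R ≥ 1} (R^(-γ) ∫_{B(0,R)} |f|^p dx)^(1/p)`. -/
def MorreyNorm (p γ : ℝ) (f : E3 → ℝ) : ℝ :=
  ⨆ R : {R : ℝ // 1 ≤ R}, morreyAvg p γ f R.1

/-- Membership in the local Morrey space `M^p_γ(ℝ³)`: `f ∈ L^p_loc` and the Morrey norm
is finite. -/
def MemMorrey (p γ : ℝ) (f : E3 → ℝ) : Prop :=
  (∀ R : ℝ, IntegrableOn (fun x => |f x| ^ p) (Metric.closedBall (0 : E3) R) volume) ∧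
  BddAbove (Set.range fun R : {R : ℝ // 1 ≤ R} => morreyAvg p γ f R.1)

/-- Membership in the space `M^p_{γ,0}(ℝ³)`: `f ∈ M^p_γ` and the averaged quantity over
the annuli `{R/2 ≤ |x| ≤ R}` vanishes as `R → ∞`. -/
def MemMorrey0 (p γ : ℝ) (f : E3 → ℝ) : Prop :=
  MemMorrey p γ f ∧
  Tendsto (fun R : ℝ => (R ^ (-γ) * ∫ x in annulus (R / 2) R, |f x| ^ p) ^ (1 / p))
    atTop (nhds 0)

/-!
Let `J = curl B` and let `E = J - u × B + J × B` be the electric field of Ohm's law with Hall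
term, so that the stationary induction equation reads `curl E = 0`. The energy flux
`H = (∇u)ᵀu - E × B` then satisfies `div (E × B) = curl E · B - E · J = -E · J` and
`div ((∇u)ᵀu) = Δu · u + |∇u|²`, where `Δu = (u·∇)u + ∇Π - J × B` by the momentum equation. The
Lorentz work `(J × B) · u` cancels against `(B × u) · J`, the Hall term `(J × B) · J` vanishes, and
`div H = |∇u|² + |J|² + (u·∇)u · u + ∇Π · u`. Since `φ²H` has compact support,
`0 = ∫ div (φ²H) = ∫ φ² div H + 2 ∫ φ ∇φ · H`, and expanding `∇φ · H` gives the identity.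
-/

theorem contDiff_pd {f : E3 → ℝ} (hf : ContDiff ℝ (⊤ : ℕ∞) f) (i : Fin 3) :
    ContDiff ℝ (⊤ : ℕ∞) (pd i f) :=
  (hf.fderiv_right (by simp)).clm_apply contDiff_const

section pd

variable {f g : E3 → ℝ} {x : E3}

theorem pd_add (hf : DifferentiableAt ℝ f x) (hg : DifferentiableAt ℝ g x) (i : Fin 3) :
    pd i (fun y => f y + g y) x = pd i f x + pd i g x := by
  simp [pd, fderiv_fun_add hf hg]

theorem pd_sub (hf : DifferentiableAt ℝ f x) (hg : DifferentiableAt ℝ g x) (i : Fin 3) :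
    pd i (fun y => f y - g y) x = pd i f x - pd i g x := by
  simp [pd, fderiv_fun_sub hf hg]

theorem pd_mul (hf : DifferentiableAt ℝ f x) (hg : DifferentiableAt ℝ g x) (i : Fin 3) :
    pd i (fun y => f y * g y) x = pd i f x * g x + f x * pd i g x := by
  simp only [pd, fderiv_fun_mul hf hg, add_apply, smul_apply, smul_eq_mul]
  ring

theorem pd_sq (hf : DifferentiableAt ℝ f x) (i : Fin 3) :
    pd i (fun y => f y ^ 2) x = 2 * f x * pd i f x := by
  simp only [sq, pd_mul hf hf]
  ring

theorem pd_sum {ι : Type*} {s : Finset ι} {g : ι → E3 → ℝ}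
    (hg : ∀ k ∈ s, DifferentiableAt ℝ (g k) x) (i : Fin 3) :
    pd i (fun y => ∑ k ∈ s, g k y) x = ∑ k ∈ s, pd i (g k) x := by
  simp [pd, fderiv_fun_sum hg]

theorem pd_comm (hf : ContDiff ℝ 2 f) (i j : Fin 3) : pd i (pd j f) x = pd j (pd i f) x := by
  have hdf : DifferentiableAt ℝ (fderiv ℝ f) x :=
    (hf.fderiv_right (m := 1) (by norm_num)).differentiable one_ne_zero x
  have hsecond : ∀ k l : Fin 3, pd k (pd l f) x
      = fderiv ℝ (fderiv ℝ f) x (EuclideanSpace.single k 1) (EuclideanSpace.single l 1) := by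
    intro k l
    change fderiv ℝ (fun y => fderiv ℝ f y (EuclideanSpace.single l 1)) x _ = _
    simp [fderiv_clm_apply hdf (differentiableAt_const _)]
  rw [hsecond, hsecond]
  exact hf.contDiffAt.isSymmSndFDerivAt (by simp) _ _

end pd

theorem integral_fderiv_apply_eq_zero {E : Type*} [NormedAddCommGroup E] [NormedSpace ℝ E]
    [FiniteDimensional ℝ E] [MeasurableSpace E] [BorelSpace E] {μ : Measure E}
    [μ.IsAddHaarMeasure] {f : E → ℝ} (hf : ContDiff ℝ 1 f) (hfc : HasCompactSupport f) (v : E) :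
    ∫ x, fderiv ℝ f x v ∂μ = 0 := by
  have hint : Integrable (fun x => fderiv ℝ f x v) μ :=
    ((hf.continuous_fderiv one_ne_zero).clm_apply continuous_const).integrable_of_hasCompactSupport
      (hfc.fderiv_apply ℝ v)
  have := integral_mul_fderiv_eq_neg_fderiv_mul_of_integrable (μ := μ) (f := fun _ => (1 : ℝ))
    (g := f) (v := v) (by simp) (by simpa using hint)
    (by simpa using hf.continuous.integrable_of_hasCompactSupport hfc)
    (fun _ _ => differentiableAt_const _) (fun x _ => hf.differentiable one_ne_zero x)
  simpa using this

theorem integral_pd_eq_zero {f : E3 → ℝ} (hf : ContDiff ℝ 1 f) (hfc : HasCompactSupport f)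
    (i : Fin 3) : ∫ x, pd i f x = 0 :=
  integral_fderiv_apply_eq_zero hf hfc _

def SmoothField (V : E3 → Fin 3 → ℝ) : Prop := ∀ i, ContDiff ℝ (⊤ : ℕ∞) fun x => V x i

namespace SmoothField

variable {V W : E3 → Fin 3 → ℝ}

theorem differentiableAt (hV : SmoothField V) (i : Fin 3) (x : E3) :
    DifferentiableAt ℝ (fun y => V y i) x :=
  (hV i).differentiable (by simp) x

theorem contDiff_pd (hV : SmoothField V) (i j : Fin 3) :
    ContDiff ℝ (⊤ : ℕ∞) (pd j fun y => V y i) :=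
  _root_.contDiff_pd (hV i) j

theorem add (hV : SmoothField V) (hW : SmoothField W) : SmoothField fun x => V x + W x :=
  fun i => (hV i).add (hW i)

theorem mul_left {f : E3 → ℝ} (hf : ContDiff ℝ (⊤ : ℕ∞) f) (hV : SmoothField V) :
    SmoothField fun x i => f x * V x i :=
  fun i => hf.mul (hV i)

theorem grad {f : E3 → ℝ} (hf : ContDiff ℝ (⊤ : ℕ∞) f) : SmoothField (grad f) :=
  _root_.contDiff_pd hf

theorem cross (hV : SmoothField V) (hW : SmoothField W) :
    SmoothField fun x => _root_.cross (V x) (W x) := by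
  unfold SmoothField at hV hW
  intro k
  fin_cases k <;>
    simp only [_root_.cross, Fin.zero_eta, Fin.mk_one, Fin.reduceFinMk, Matrix.cons_val_zero,
      Matrix.cons_val_one, Matrix.cons_val] <;>
    fun_prop

theorem curl (hV : SmoothField V) : SmoothField (curl V) := by
  intro k
  have := hV.contDiff_pd
  fin_cases k <;>
    simp only [_root_.curl, Fin.zero_eta, Fin.mk_one, Fin.reduceFinMk, Matrix.cons_val_zero,
      Matrix.cons_val_one, Matrix.cons_val] <;>
    fun_prop

theorem contDiff_gradNormSq (hV : SmoothField V) : ContDiff ℝ (⊤ : ℕ∞) (gradNormSq V) := by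
  have := hV.contDiff_pd
  unfold gradNormSq
  fun_prop

theorem contDiff_dot3 (hV : SmoothField V) (hW : SmoothField W) :
    ContDiff ℝ (⊤ : ℕ∞) fun x => dot3 (V x) (W x) := by
  unfold SmoothField at hV hW
  unfold dot3
  fun_prop

theorem jacobian_transpose_mul_self (hV : SmoothField V) :
    SmoothField fun y j => ∑ i, pd j (fun z => V z i) y * V y i :=
  fun j => ContDiff.sum fun i _ => (hV.contDiff_pd i j).mul (hV i)

theorem advect {u : E3 → Fin 3 → ℝ} (hu : SmoothField u) (hV : SmoothField V) :
    SmoothField (advect u V) := by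
  have := hV.contDiff_pd
  unfold SmoothField at hu
  intro i
  unfold _root_.advect
  fun_prop

end SmoothField

theorem vnorm_sq (v : Fin 3 → ℝ) : vnorm v ^ 2 = dot3 v v := by
  rw [vnorm, Real.sq_sqrt (Finset.sum_nonneg fun i _ => sq_nonneg _)]
  simp only [dot3, sq]

section VectorCalculus

variable {V W : E3 → Fin 3 → ℝ} {x : E3}

theorem dot3_grad_sq {f : E3 → ℝ} (hf : DifferentiableAt ℝ f x) (v : Fin 3 → ℝ) :
    dot3 (grad (fun y => f y ^ 2) x) v = 2 * f x * dot3 (grad f x) v := by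
  simp only [dot3, grad, pd_sq hf, Finset.mul_sum, mul_assoc]

theorem vdiv_mul_left {f : E3 → ℝ} (hf : DifferentiableAt ℝ f x)
    (hV : ∀ i, DifferentiableAt ℝ (fun y => V y i) x) :
    vdiv (fun y i => f y * V y i) x = dot3 (grad f x) (V x) + f x * vdiv V x := by
  simp only [vdiv, dot3, grad, pd_mul hf (hV _), Finset.sum_add_distrib, Finset.mul_sum]

theorem vdiv_sub (hV : ∀ i, DifferentiableAt ℝ (fun y => V y i) x)
    (hW : ∀ i, DifferentiableAt ℝ (fun y => W y i) x) :
    vdiv (fun y i => V y i - W y i) x = vdiv V x - vdiv W x := by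
  simp only [vdiv, pd_sub (hV _) (hW _), Finset.sum_sub_distrib]

theorem curl_add (hV : ∀ i, DifferentiableAt ℝ (fun y => V y i) x)
    (hW : ∀ i, DifferentiableAt ℝ (fun y => W y i) x) :
    curl (fun y => V y + W y) x = curl V x + curl W x := by
  ext k
  fin_cases k <;>
    simp only [Fin.zero_eta, Fin.mk_one, Fin.reduceFinMk, curl, Pi.add_apply,
      pd_add (hV _) (hW _), Matrix.cons_val_zero, Matrix.cons_val_one, Matrix.cons_val] <;>
    ring

theorem vdiv_cross (hV : ∀ i, DifferentiableAt ℝ (fun y => V y i) x)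
    (hW : ∀ i, DifferentiableAt ℝ (fun y => W y i) x) :
    vdiv (fun y => cross (V y) (W y)) x = dot3 (curl V x) (W x) - dot3 (V x) (curl W x) := by
  simp only [vdiv, cross, curl, dot3, Fin.sum_univ_three, Matrix.cons_val_zero,
    Matrix.cons_val_one, Matrix.cons_val_two, Matrix.head_cons, Matrix.tail_cons]
  rw [pd_sub ((hV 1).fun_mul (hW 2)) ((hV 2).fun_mul (hW 1)),
    pd_sub ((hV 2).fun_mul (hW 0)) ((hV 0).fun_mul (hW 2)),
    pd_sub ((hV 0).fun_mul (hW 1)) ((hV 1).fun_mul (hW 0)),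
    pd_mul (hV 1) (hW 2), pd_mul (hV 2) (hW 1), pd_mul (hV 2) (hW 0),
    pd_mul (hV 0) (hW 2), pd_mul (hV 0) (hW 1), pd_mul (hV 1) (hW 0)]
  ring

theorem curl_curl_of_vdiv_eq_zero (hV : SmoothField V) (hdiv : ∀ y, vdiv V y = 0) :
    curl (curl V) x = -vlap V x := by
  have hgrad_div : ∀ j, ∑ k, pd j (pd k fun y => V y k) x = 0 := by
    intro j
    rw [← pd_sum fun k _ => (hV.contDiff_pd k k).differentiable (by simp) x]
    rw [show (fun y => ∑ k, pd k (fun z => V z k) y) = fun _ => 0 from funext hdiv]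
    simp [pd]
  have hd : ∀ i j, DifferentiableAt ℝ (pd j fun y => V y i) x :=
    fun i j => (hV.contDiff_pd i j).differentiable (by simp) x
  have hcomm : ∀ i j k, pd j (pd k fun y => V y i) x = pd k (pd j fun y => V y i) x :=
    fun i j k => pd_comm ((hV i).of_le (by decide)) j k
  ext k
  fin_cases k <;>
    simp only [Fin.zero_eta, Fin.mk_one, Fin.reduceFinMk, curl, vlap, lap, Fin.sum_univ_three,
      Matrix.cons_val_zero, Matrix.cons_val_one,
      Matrix.cons_val_two, Matrix.head_cons, Matrix.tail_cons, Pi.neg_apply] at hgrad_div ⊢ <;>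
    rw [pd_sub (hd _ _) (hd _ _), pd_sub (hd _ _) (hd _ _)]
  · linear_combination hgrad_div 0 + hcomm 1 1 0 + hcomm 2 2 0
  · linear_combination hgrad_div 1 + hcomm 2 2 1 + hcomm 0 0 1
  · linear_combination hgrad_div 2 + hcomm 0 0 2 + hcomm 1 1 2

theorem vdiv_jacobian_transpose_mul_self {u : E3 → Fin 3 → ℝ} (hu : SmoothField u) :
    vdiv (fun y j => ∑ i, pd j (fun z => u z i) y * u y i) x
      = dot3 (vlap u x) (u x) + gradNormSq u x := by
  have hd : ∀ i j, DifferentiableAt ℝ (pd j fun y => u y i) x :=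
    fun i j => (hu.contDiff_pd i j).differentiable (by simp) x
  have hterm : ∀ j, pd j (fun y => ∑ i, pd j (fun z => u z i) y * u y i) x
      = ∑ i, (pd j (pd j fun z => u z i) x * u x i
        + pd j (fun z => u z i) x * pd j (fun z => u z i) x) := by
    intro j
    rw [pd_sum fun i _ => (hd i j).fun_mul (hu.differentiableAt i x)]
    exact Finset.sum_congr rfl fun i _ => pd_mul (hd i j) (hu.differentiableAt i x) j
  rw [vdiv, Finset.sum_congr rfl fun j _ => hterm j]
  simp only [dot3, vlap, lap, gradNormSq, Fin.sum_univ_three]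
  ring

theorem integral_vdiv_eq_zero (hV : SmoothField V) (hVc : ∀ i, HasCompactSupport fun y => V y i) :
    ∫ y, vdiv V y = 0 := by
  have hint : ∀ i, Integrable (pd i fun y => V y i) := fun i =>
    (hV.contDiff_pd i i).continuous.integrable_of_hasCompactSupport ((hVc i).fderiv_apply ℝ _)
  simp only [vdiv]
  rw [integral_finsetSum _ fun i _ => hint i]
  exact Finset.sum_eq_zero fun i _ => integral_pd_eq_zero ((hV i).of_le (by simp)) (hVc i) i

end VectorCalculus

def electricField (u B : E3 → Fin 3 → ℝ) : E3 → Fin 3 → ℝ :=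
  fun y => curl B y + cross (B y) (u y) + cross (curl B y) (B y)

def energyFlux (u B : E3 → Fin 3 → ℝ) : E3 → Fin 3 → ℝ :=
  fun y j => ∑ i, pd j (fun z => u z i) y * u y i - cross (electricField u B y) (B y) j

theorem dot3_grad_energyFlux (u B : E3 → Fin 3 → ℝ) (φ : E3 → ℝ) (x : E3) :
    dot3 (grad φ x) (energyFlux u B x)
      = ∑ i, ∑ j, pd j (fun y => u y i) x * (u x i * pd j φ x)
        + dot3 (curl B x) (cross (grad φ x) (B x))
        + dot3 (cross (B x) (u x)) (cross (grad φ x) (B x))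
        + dot3 (cross (curl B x) (B x)) (cross (grad φ x) (B x)) := by
  simp only [dot3, grad, energyFlux, electricField, cross, Fin.sum_univ_three, Pi.add_apply,
    Matrix.cons_val_zero, Matrix.cons_val_one, Matrix.cons_val_two, Matrix.head_cons,
    Matrix.tail_cons]
  ring

namespace IsHallMHD

variable {u B : E3 → Fin 3 → ℝ} {P : E3 → ℝ}

theorem smoothField_electricField (h : IsHallMHD u B P) : SmoothField (electricField u B) :=
  ((SmoothField.curl h.smooth_B).add (SmoothField.cross h.smooth_B h.smooth_u)).add
    ((SmoothField.curl h.smooth_B).cross h.smooth_B)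

theorem curl_electricField (h : IsHallMHD u B P) (x : E3) : curl (electricField u B) x = 0 := by
  have hJ := SmoothField.curl h.smooth_B
  have hBu := SmoothField.cross h.smooth_B h.smooth_u
  have hJB := hJ.cross h.smooth_B
  have hcurl : curl (electricField u B) x
      = curl (curl B) x + curl (fun y => cross (B y) (u y)) x
        + curl (fun y => cross (curl B y) (B y)) x := by
    unfold electricField
    rw [curl_add ((hJ.add hBu).differentiableAt · x) (hJB.differentiableAt · x),
      curl_add (hJ.differentiableAt · x) (hBu.differentiableAt · x)]
  rw [hcurl, curl_curl_of_vdiv_eq_zero h.smooth_B h.div_B]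
  ext i
  simpa using h.induction x i

theorem smoothField_energyFlux (h : IsHallMHD u B P) : SmoothField (energyFlux u B) := by
  have hkin := SmoothField.jacobian_transpose_mul_self h.smooth_u
  have hpoynting := h.smoothField_electricField.cross h.smooth_B
  exact fun j => (hkin j).sub (hpoynting j)

theorem vdiv_energyFlux (h : IsHallMHD u B P) (x : E3) :
    vdiv (energyFlux u B) x
      = gradNormSq u x + dot3 (curl B x) (curl B x) + dot3 (advect u u x) (u x)
        + dot3 (grad P x) (u x) := by
  have hkin := SmoothField.jacobian_transpose_mul_self h.smooth_u
  have hE := h.smoothField_electricField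
  have hvlap : vlap u x = advect u u x + grad P x - cross (curl B x) (B x) := by
    ext i
    simp only [Pi.add_apply, Pi.sub_apply]
    linear_combination -h.momentum x i
  unfold energyFlux
  rw [vdiv_sub (hkin.differentiableAt · x) ((hE.cross h.smooth_B).differentiableAt · x),
    vdiv_jacobian_transpose_mul_self h.smooth_u,
    vdiv_cross (hE.differentiableAt · x) (SmoothField.differentiableAt h.smooth_B · x),
    h.curl_electricField, hvlap]
  simp only [dot3, electricField, cross, Fin.sum_univ_three, Pi.add_apply, Pi.sub_apply,
    Pi.zero_apply, Matrix.cons_val_zero, Matrix.cons_val_one, Matrix.cons_val_two,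
    Matrix.head_cons, Matrix.tail_cons]
  ring

theorem vdiv_mul_energyFlux (h : IsHallMHD u B P) {φ : E3 → ℝ} {x : E3}
    (hφ : DifferentiableAt ℝ φ x) :
    vdiv (fun y j => φ y ^ 2 * energyFlux u B y j) x
      = (gradNormSq u x + dot3 (curl B x) (curl B x)) * φ x ^ 2
        + 2 * (φ x * ∑ i, ∑ j, pd j (fun y => u y i) x * (u x i * pd j φ x))
        + dot3 (advect u u x) (u x) * φ x ^ 2
        + 2 * (φ x * dot3 (curl B x) (cross (grad φ x) (B x)))
        + 2 * (φ x * dot3 (cross (B x) (u x)) (cross (grad φ x) (B x)))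
        + 2 * (φ x * dot3 (cross (curl B x) (B x)) (cross (grad φ x) (B x)))
        + dot3 (grad P x) (u x) * φ x ^ 2 := by
  rw [vdiv_mul_left (hφ.fun_pow 2) (h.smoothField_energyFlux.differentiableAt · x),
    dot3_grad_sq hφ, dot3_grad_energyFlux, h.vdiv_energyFlux]
  ring

end IsHallMHD

theorem HasCompactSupport.integrable_of_continuous_of_vanishing {X : Type*} [TopologicalSpace X]
    [MeasurableSpace X] [OpensMeasurableSpace X] {μ : Measure X} [IsFiniteMeasureOnCompacts μ]
    {f g : X → ℝ} (hf : HasCompactSupport f) (hg : Continuous g) (hgf : ∀ x, f x = 0 → g x = 0) :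
    Integrable g μ :=
  hg.integrable_of_hasCompactSupport (hf.mono fun x hx hfx => hx (hgf x hfx))

/-- local energy identity for the stationary Hall-MHD equations. -/
theorem hallMHD_local_energy_identity (u B : E3 → Fin 3 → ℝ) (P : E3 → ℝ)
    (hsol : IsHallMHD u B P)
    (φ : E3 → ℝ) (hφ : ContDiff ℝ (⊤ : ℕ∞) φ) (hφc : HasCompactSupport φ) :
    ∫ x, (gradNormSq u x + vnorm (curl B x) ^ 2) * φ x ^ 2
      = -2 * (∫ x, φ x * ∑ i, ∑ j, pd j (fun y => u y i) x * (u x i * pd j φ x))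
        - (∫ x, dot3 (advect u u x) (u x) * φ x ^ 2)
        - 2 * (∫ x, φ x * dot3 (curl B x) (cross (grad φ x) (B x)))
        - 2 * (∫ x, φ x * dot3 (cross (B x) (u x)) (cross (grad φ x) (B x)))
        - 2 * (∫ x, φ x * dot3 (cross (curl B x) (B x)) (cross (grad φ x) (B x)))
        - ∫ x, dot3 (grad P x) (u x) * φ x ^ 2 := by
  have hzero := integral_vdiv_eq_zero (hsol.smoothField_energyFlux.mul_left (hφ.pow 2))
    fun j => hφc.mono fun y hy h0 => hy (by simp [h0])
  simp only [hsol.vdiv_mul_energyFlux (hφ.differentiable (by simp) _)] at hzero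
  have hu : SmoothField u := hsol.smooth_u
  have hB : SmoothField B := hsol.smooth_B
  have hgφB := (SmoothField.grad hφ).cross hB
  have := hu.contDiff_gradNormSq.continuous
  have := (hB.curl.contDiff_dot3 hB.curl).continuous
  have := ((hu.advect hu).contDiff_dot3 hu).continuous
  have := (hB.curl.contDiff_dot3 hgφB).continuous
  have := ((hB.cross hu).contDiff_dot3 hgφB).continuous
  have := ((hB.curl.cross hB).contDiff_dot3 hgφB).continuous
  have := ((SmoothField.grad hsol.smooth_P).contDiff_dot3 hu).continuous
  have := hu.contDiff_pd
  have := contDiff_pd hφ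
  have := hsol.smooth_u
  rw [integral_add, integral_add, integral_add, integral_add, integral_add, integral_add,
    integral_const_mul, integral_const_mul, integral_const_mul, integral_const_mul] at hzero
  · simp only [vnorm_sq]
    linarith
  all_goals exact hφc.integrable_of_continuous_of_vanishing (by fun_prop) (by simp +contextual)
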